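/- Leibniz-type formula for compositions of Demazure operators: for a reduced expression w = s_{i_1} s_{i_2} ··· s_{i_l} in the symmetric group and polynomials f, g, one has Δ_{i_1} Δ_{i_2} ··· Δ_{i_l}(fg) = ∑ A_{i_1} A_{i_2} ··· A_{i_l}(f) · B_{i_1} B_{i_2} ··· B_{i_l}(g), where the sum runs over all 2^l choices in which, for each j, either (A_{i_j}, B_{i_j}) = (Δ_{i_j}, id) or (A_{i_j}, B_{i_j}) = (s_{i_j}, Δ_{i_j}). -/

import Mathlib

/-!
If `d * D f = f - s f` with `d` left regular and `s` a ring endomorphism, then `D` is additive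
and satisfies the twisted Leibniz rule `D (p * q) = D p * q + s p * D q`; the Demazure operator
is the case `d = x_i - x_{i+1}`, `s = s_i`. Expanding `D_{i₁} ⋯ D_{i_l} (f * g)` by the twisted
Leibniz rule one operator at a time, each factor either stays with `f` (as `D`, leaving `g`
untouched) or passes to `g` (as `D`, twisting `f` by `s`); this gives the `2^l` terms.
-/

open MvPolynomial

section TwistedDerivation

variable {R F : Type*} [CommRing R] [FunLike F R R] [RingHomClass F R R]
  {d : R} {s : F} {D : R → R}

theorem map_add_of_mul_eq_sub (hd : IsLeftRegular d) (hD : ∀ f, d * D f = f - s f) (p q : R) :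
    D (p + q) = D p + D q :=
  hd <| show d * _ = d * _ by rw [hD, map_add, mul_add, hD, hD]; ring

theorem map_mul_of_mul_eq_sub (hd : IsLeftRegular d) (hD : ∀ f, d * D f = f - s f) (p q : R) :
    D (p * q) = D p * q + s p * D q :=
  hd <| show d * _ = d * _ by rw [hD, map_mul]; linear_combination (-q) * hD p - s p * hD q

end TwistedDerivation

theorem foldr_mul_eq_sum_of_twisted_leibniz {ι R : Type*} [CommRing R] (D s : ι → R → R)
    (hadd : ∀ i p q, D i (p + q) = D i p + D i q)
    (hmul : ∀ i p q, D i (p * q) = D i p * q + s i p * D i q)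
    (L : List ι) (f g : R) :
    L.foldr (fun i acc => D i acc) (f * g)
      = ∑ ε : Fin L.length → Bool,
          ((List.finRange L.length).foldr
            (fun t acc => if ε t then D (L.get t) acc else s (L.get t) acc) f)
          * ((List.finRange L.length).foldr
            (fun t acc => if ε t then acc else D (L.get t) acc) g) := by
  induction L with
  | nil => simp
  | cons i L ih =>
    have hsum : ∀ (α : Type) [Fintype α] (u : α → R), D i (∑ a, u a) = ∑ a, D i (u a) :=
      fun _ _ u => map_sum (AddMonoidHom.mk' (D i) (hadd i)) u Finset.univ
    rw [List.foldr_cons, ih, hsum]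
    -- split a choice on `i :: L` into its choice at the head `i` and its choice on `L`
    simp only [List.length_cons]
    rw [← Equiv.sum_comp (Fin.consEquiv fun _ : Fin (L.length + 1) => Bool),
      Fintype.sum_prod_type, Fintype.sum_bool, ← Finset.sum_add_distrib]
    refine Finset.sum_congr rfl fun ε _ => ?_
    simp only [Fin.consEquiv_apply, List.finRange_succ, List.foldr_cons, List.foldr_map,
      Fin.cons_zero, Fin.cons_succ, List.get_cons_zero, if_true,
      Bool.false_eq_true, if_false]
    exact hmul i _ _

theorem demazure_composition_leibniz_general
    (K : Type*) [Field K] (m : ℕ)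
    (D : Fin m → MvPolynomial (Fin (m + 1)) K → MvPolynomial (Fin (m + 1)) K)
    (hD : ∀ (i : Fin m) (f : MvPolynomial (Fin (m + 1)) K),
      (X i.castSucc - X i.succ) * D i f
        = f - rename (Equiv.swap i.castSucc i.succ) f)
    (L : List (Fin m)) (f g : MvPolynomial (Fin (m + 1)) K) :
    L.foldr (fun i acc => D i acc) (f * g)
      = ∑ ε : Fin L.length → Bool,
          ((List.finRange L.length).foldr
            (fun t acc => if ε t then D (L.get t) acc
              else rename (Equiv.swap (L.get t).castSucc (L.get t).succ) acc) f)
          * ((List.finRange L.length).foldr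
            (fun t acc => if ε t then acc else D (L.get t) acc) g) := by
  have hregular (i : Fin m) : IsLeftRegular (X i.castSucc - X i.succ : MvPolynomial _ K) :=
    (IsRegular.of_ne_zero <| sub_ne_zero.mpr fun h =>
      (Fin.castSucc_lt_succ (i := i)).ne (X_injective h)).left
  exact foldr_mul_eq_sum_of_twisted_leibniz D
    (fun i => rename (Equiv.swap i.castSucc i.succ))
    (fun i => map_add_of_mul_eq_sub (hregular i) (hD i))
    (fun i => map_mul_of_mul_eq_sub (hregular i) (hD i)) L f g

/-- Leibniz-type formula for compositions of Demazure operators: for a word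
`s_{i₁} s_{i₂} ⋯ s_{i_l}` (encoded by the list `L = [i₁,…,i_l]`) and
polynomials `f, g`,
`Δ_{i₁} ⋯ Δ_{i_l}(fg) = ∑ A_{i₁} ⋯ A_{i_l}(f) · B_{i₁} ⋯ B_{i_l}(g)`,
where the sum runs over all `2^l` choices `ε` in which, for each position `t`,
either `(A,B) = (Δ, id)` (when `ε t = true`) or `(A,B) = (s, Δ)`
(when `ε t = false`). -/
theorem demazure_composition_leibniz
    (K : Type*) [Field K] [CharZero K] (m : ℕ)
    (D : Fin m → MvPolynomial (Fin (m + 1)) K → MvPolynomial (Fin (m + 1)) K)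
    (hD : ∀ (i : Fin m) (f : MvPolynomial (Fin (m + 1)) K),
      (X i.castSucc - X i.succ) * D i f
        = f - rename (Equiv.swap i.castSucc i.succ) f)
    (L : List (Fin m)) (f g : MvPolynomial (Fin (m + 1)) K) :
    L.foldr (fun i acc => D i acc) (f * g)
      = ∑ ε : Fin L.length → Bool,
          ((List.finRange L.length).foldr
            (fun t acc => if ε t then D (L.get t) acc
              else rename (Equiv.swap (L.get t).castSucc (L.get t).succ) acc) f)
          * ((List.finRange L.length).foldr
            (fun t acc => if ε t then acc else D (L.get t) acc) g) :=
  demazure_composition_leibniz_general K m D hD L f g
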